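/- Let Σ contain the egd σ1: p(X,Y) ∧ p(X,Z) → Y = Z and the tgd σ2: r(X,Y) → p(X,Y). Consider Q(A) :- r(A,B) and Q'(A) :- r(A,B), p(A,B) obtained by the chase step applying σ2 to Q. If relation P may be a bag, then the step is unsound under bag semantics: the bag-valued database D with R = {{(a,b)}} and P = {{(a,b),(a,b)}} satisfies Σ and gives Q(D,B) = {{(a)}} but Q'(D,B) = {{(a),(a)}}. -/

import Mathlib

/-- A relational schema: a type of relation symbols with arities. -/
structure Schema where
  Rel : Type
  ar : Rel → ℕ

/-- A relational atom over schema `S`; variables are natural numbers. -/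
structure Atom (S : Schema) where
  rel : S.Rel
  args : Fin (S.ar rel) → ℕ

/-- A conjunctive query: a head (list of variables) and a body (list of atoms). -/
structure CQ (S : Schema) where
  hd : List ℕ
  body : List (Atom S)

variable {S : Schema} {Dom : Type}

def Atom.rename (f : ℕ → ℕ) (a : Atom S) : Atom S := ⟨a.rel, f ∘ a.args⟩

def CQ.rename (f : ℕ → ℕ) (Q : CQ S) : CQ S := ⟨Q.hd.map f, Q.body.map (Atom.rename f)⟩

/-- The variables of a query. -/
def CQ.vars (Q : CQ S) : Set ℕ := {x | x ∈ Q.hd ∨ ∃ a ∈ Q.body, ∃ i, a.args i = x}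

/-- A bag-valued database: a finite multiset of tuples for each relation symbol. -/
abbrev DB (S : Schema) (Dom : Type) := (r : S.Rel) → Multiset (Fin (S.ar r) → Dom)

/-- A set-valued database: every relation is a set. -/
def IsSetDB (D : DB S Dom) : Prop := ∀ r, (D r).Nodup

/-- An assignment satisfies a list of atoms. -/
def Sat (D : DB S Dom) (body : List (Atom S)) (γ : ℕ → Dom) : Prop :=
  ∀ a ∈ body, (γ ∘ a.args) ∈ D a.rel

/-- Bag-semantics weight of an assignment: product of multiplicities of matched tuples. -/
noncomputable def weight (D : DB S Dom) (Q : CQ S) (γ : ℕ → Dom) : ℕ :=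
  (Q.body.map fun (a : Atom S) =>
    letI : DecidableEq (Fin (S.ar a.rel) → Dom) := Classical.decEq _
    (D a.rel).count (γ ∘ a.args)).prod

/-- Canonical assignments: everything outside the query's variables is a default value. -/
def Canon [Inhabited Dom] (Q : CQ S) (γ : ℕ → Dom) : Prop := ∀ x, x ∉ Q.vars → γ x = default

/-- Bag semantics: multiplicity of the tuple `t` in `Q(D, B)`. -/
noncomputable def bagMult [Inhabited Dom] (D : DB S Dom) (Q : CQ S) (t : List Dom) : ℕ :=
  ∑ᶠ γ ∈ {γ : ℕ → Dom | Canon Q γ ∧ Q.hd.map γ = t}, weight D Q γ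

/-- Bag-set semantics: multiplicity of `t` in `Q(D, BS)`: one per satisfying assignment. -/
noncomputable def bsMult [Inhabited Dom] (D : DB S Dom) (Q : CQ S) (t : List Dom) : ℕ :=
  Nat.card {γ : ℕ → Dom // Canon Q γ ∧ Sat D Q.body γ ∧ Q.hd.map γ = t}

/-- Set semantics: the set of tuples returned by `Q` on `D`. -/
def setAns (D : DB S Dom) (Q : CQ S) : Set (List Dom) :=
  {t | ∃ γ : ℕ → Dom, Sat D Q.body γ ∧ Q.hd.map γ = t}

/-- Query isomorphism: a bijective variable renaming preserving head and body (as multiset). -/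
def CQIso (Q1 Q2 : CQ S) : Prop :=
  ∃ e : ℕ ≃ ℕ, Q1.hd.map ⇑e = Q2.hd ∧
    Multiset.map (Atom.rename ⇑e) (Q1.body : Multiset (Atom S)) = (Q2.body : Multiset (Atom S))

/-- A tuple-generating dependency (tgd) `φ → ∃ Z̄ ψ`: left-hand side atoms, right-hand
side atoms, and a finite set of existentially quantified variables. -/
structure TGD (S : Schema) where
  lhs : List (Atom S)
  rhs : List (Atom S)
  exVars : Finset ℕ

/-- An equality-generating dependency (egd) `φ → eq1 = eq2`. -/
structure EGD (S : Schema) where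
  lhs : List (Atom S)
  eq1 : ℕ
  eq2 : ℕ

/-- An embedded dependency: a tgd or an egd. -/
inductive Dep (S : Schema) where
  | tgd : TGD S → Dep S
  | egd : EGD S → Dep S

/-- Well-formedness of a tgd: existential variables do not occur on the left-hand side,
and every non-existential variable of the right-hand side occurs on the left-hand side. -/
def TGD.wf (σ : TGD S) : Prop :=
  (∀ a ∈ σ.lhs, ∀ i, a.args i ∉ σ.exVars) ∧
  (∀ a ∈ σ.rhs, ∀ i, a.args i ∉ σ.exVars → ∃ b ∈ σ.lhs, ∃ j, b.args j = a.args i)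

/-- A database satisfies a tgd. -/
def TGDSat (D : DB S Dom) (σ : TGD S) : Prop :=
  ∀ γ : ℕ → Dom, (∀ a ∈ σ.lhs, (γ ∘ a.args) ∈ D a.rel) →
    ∃ γ' : ℕ → Dom, (∀ x, x ∉ σ.exVars → γ' x = γ x) ∧
      ∀ a ∈ σ.rhs, (γ' ∘ a.args) ∈ D a.rel

/-- A database satisfies an egd. -/
def EGDSat (D : DB S Dom) (e : EGD S) : Prop :=
  ∀ γ : ℕ → Dom, (∀ a ∈ e.lhs, (γ ∘ a.args) ∈ D a.rel) → γ e.eq1 = γ e.eq2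

/-- A database satisfies an embedded dependency. -/
def DSat (D : DB S Dom) : Dep S → Prop
  | .tgd σ => TGDSat D σ
  | .egd e => EGDSat D e

/-- A database satisfies a (finite) set of embedded dependencies. -/
def DBSat (D : DB S Dom) (Δ : List (Dep S)) : Prop := ∀ d ∈ Δ, DSat D d

/-- Chase with tgd `σ` is applicable to `Q` via `h`: `h` maps the left-hand side into the
body of `Q` and cannot be extended to a homomorphism of the whole dependency. -/
def TgdApplicable (σ : TGD S) (Q : CQ S) (h : ℕ → ℕ) : Prop :=
  (∀ a ∈ σ.lhs, a.rename h ∈ Q.body) ∧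
  ¬ ∃ h' : ℕ → ℕ, (∀ x, x ∉ σ.exVars → h' x = h x) ∧ ∀ a ∈ σ.rhs, a.rename h' ∈ Q.body

/-- `h'` extends `h` by mapping the existential variables injectively to fresh variables. -/
def FreshExt (σ : TGD S) (Q : CQ S) (h h' : ℕ → ℕ) : Prop :=
  (∀ x, x ∉ σ.exVars → h' x = h x) ∧ Set.InjOn h' ↑σ.exVars ∧
  ∀ z ∈ σ.exVars, h' z ∉ Q.vars

/-- The result of a tgd chase step: conjoin the instantiated right-hand side. -/
def TgdResult (σ : TGD S) (Q : CQ S) (h' : ℕ → ℕ) : CQ S :=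
  ⟨Q.hd, Q.body ++ σ.rhs.map (Atom.rename h')⟩

/-- A chase step with a tgd. -/
def TgdStep (σ : TGD S) (Q Q' : CQ S) : Prop :=
  ∃ h h' : ℕ → ℕ, TgdApplicable σ Q h ∧ FreshExt σ Q h h' ∧ Q' = TgdResult σ Q h'

/-- A chase step with an egd: identify the two variables it equates. -/
def EgdStep (e : EGD S) (Q Q' : CQ S) : Prop :=
  ∃ h : ℕ → ℕ, (∀ a ∈ e.lhs, a.rename h ∈ Q.body) ∧ h e.eq1 ≠ h e.eq2 ∧
    (Q' = Q.rename (fun x => if x = h e.eq1 then h e.eq2 else x) ∨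
     Q' = Q.rename (fun x => if x = h e.eq2 then h e.eq1 else x))

/-- A chase step with an embedded dependency. -/
def DepStep : Dep S → CQ S → CQ S → Prop
  | .tgd σ => TgdStep σ
  | .egd e => EgdStep e

/-- A (set-semantics) chase step using some dependency from `Δ`. -/
def SetChaseStep (Δ : List (Dep S)) (Q Q' : CQ S) : Prop := ∃ d ∈ Δ, DepStep d Q Q'

/-- A query is a terminal result of set-semantics chase: no chase step applies. -/
def SetTerminal (Δ : List (Dep S)) (Q : CQ S) : Prop := ¬ ∃ Q', SetChaseStep Δ Q Q'

/-- An atom uses variable `v`. -/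
def Atom.uses (a : Atom S) (v : ℕ) : Prop := ∃ i, a.args i = v

/-- Variable `v` occurs in the body of `Q`. -/
def Occurs (v : ℕ) (Q : CQ S) : Prop := ∃ a ∈ Q.body, a.uses v

/-- All variables of a tgd. -/
def TGD.varSet (σ : TGD S) : Set ℕ :=
  {x | (∃ a ∈ σ.lhs, a.uses x) ∨ (∃ a ∈ σ.rhs, a.uses x) ∨ x ∈ σ.exVars}

/-- A regularized tgd: its right-hand side admits no nonshared partition into two nonempty
parts (i.e., parts sharing no existential variable). -/
def Regularized (σ : TGD S) : Prop :=
  ¬ ∃ l1 l2 : List (Atom S), l1 ≠ [] ∧ l2 ≠ [] ∧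
      ((l1 ++ l2 : List (Atom S)) : Multiset (Atom S)) = (σ.rhs : Multiset (Atom S)) ∧
      ∀ v ∈ σ.exVars, ¬ ((∃ a ∈ l1, a.uses v) ∧ (∃ a ∈ l2, a.uses v))

/-- A pair of fresh extensions of `h` with pairwise distinct fresh images (two disjoint
copies of fresh existential variables). -/
def FreshPair (σ : TGD S) (Q : CQ S) (h h1 h2 : ℕ → ℕ) : Prop :=
  FreshExt σ Q h h1 ∧ FreshExt σ Q h h2 ∧
  ∀ z ∈ σ.exVars, ∀ z' ∈ σ.exVars, h1 z ≠ h2 z'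

/-- The associated test query `Q^{σ,h,θ}`: the body of `Q` conjoined with two copies of the
right-hand side of `σ`, instantiated with two disjoint families of fresh variables. -/
def testQuery (σ : TGD S) (Q : CQ S) (h1 h2 : ℕ → ℕ) : CQ S :=
  ⟨Q.hd, Q.body ++ σ.rhs.map (Atom.rename h1) ++ σ.rhs.map (Atom.rename h2)⟩

/-- `σ` is assignment-fixing w.r.t. `Q` and `h`: in every terminal set-chase result of the
associated test query, at most one of the two fresh copies of each existential variable
still occurs. -/
def AssignmentFixing (Δ : List (Dep S)) (σ : TGD S) (Q : CQ S) (h : ℕ → ℕ) : Prop :=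
  ∀ h1 h2 : ℕ → ℕ, FreshPair σ Q h h1 h2 →
    ∀ R : CQ S, Relation.ReflTransGen (SetChaseStep Δ) (testQuery σ Q h1 h2) R →
      SetTerminal Δ R → ∀ z ∈ σ.exVars, ¬ (Occurs (h1 z) R ∧ Occurs (h2 z) R)

/-- Relation symbols r and p (both binary). -/
inductive RelRP where
  | r | p

def Srp : Schema := ⟨RelRP, fun _ => 2⟩

/-- σ1 : p(X,Y) ∧ p(X,Z) → Y = Z   (X = 0, Y = 1, Z = 2). -/
def egd1 : EGD Srp := ⟨[⟨RelRP.p, ![0, 1]⟩, ⟨RelRP.p, ![0, 2]⟩], 1, 2⟩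

/-- σ2 : r(X,Y) → p(X,Y)   (X = 0, Y = 1; no existential variables). -/
def tgd2' : TGD Srp := ⟨[⟨RelRP.r, ![0, 1]⟩], [⟨RelRP.p, ![0, 1]⟩], ∅⟩

def Sigma15 : List (Dep Srp) := [Dep.egd egd1, Dep.tgd tgd2']

/-- The bag-valued database D with R = {{(a,b)}} and P = {{(a,b),(a,b)}},
encoding a = 0, b = 1. -/
def D15 : DB Srp ℕ := fun x =>
  match x with
  | .r => {![0, 1]}
  | .p => {![0, 1], ![0, 1]}

/-- Q(A) :- r(A,B)   (A = 0, B = 1). -/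
def Q15 : CQ Srp := ⟨[0], [⟨RelRP.r, ![0, 1]⟩]⟩

/-- Q'(A) :- r(A,B), p(A,B). -/
def Q15' : CQ Srp := ⟨[0], [⟨RelRP.r, ![0, 1]⟩, ⟨RelRP.p, ![0, 1]⟩]⟩

/-!
The only canonical assignment satisfying either body is `A ↦ a, B ↦ b`. Its weight counts the
matched tuples with multiplicity: the single `R`-tuple once, and in `Q'` also the doubled
`P`-tuple, so `Q` returns `(a)` once and `Q'` twice. The dependencies only see which tuples
occur, and every relation of `D` holds the single distinct tuple `(a, b)`, so `D ⊨ Σ`.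
-/

theorem weight_eq_prod_count [DecidableEq Dom] (D : DB S Dom) (Q : CQ S) (γ : ℕ → Dom) :
    weight D Q γ = (Q.body.map fun a => (D a.rel).count (γ ∘ a.args)).prod := by
  unfold weight
  congr!

theorem weight_ne_zero_iff (D : DB S Dom) (Q : CQ S) (γ : ℕ → Dom) :
    weight D Q γ ≠ 0 ↔ Sat D Q.body γ := by
  classical
  simp [weight_eq_prod_count, Sat]

theorem Canon.eq_of_eqOn [Inhabited Dom] {Q : CQ S} {γ γ' : ℕ → Dom} (hγ : Canon Q γ)
    (hγ' : Canon Q γ') (h : Set.EqOn γ γ' Q.vars) : γ = γ' := by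
  funext x
  by_cases hx : x ∈ Q.vars
  · exact h hx
  · rw [hγ x hx, hγ' x hx]

theorem bagMult_eq_weight_of_unique [Inhabited Dom] {D : DB S Dom} {Q : CQ S} {t : List Dom}
    {γ₀ : ℕ → Dom} (hcanon : Canon Q γ₀) (hhd : Q.hd.map γ₀ = t)
    (huniq : ∀ γ, Canon Q γ → Sat D Q.body γ → γ = γ₀) :
    bagMult D Q t = weight D Q γ₀ := by
  rw [bagMult, finsum_mem_inter_support_eq' _ _ {γ₀}, finsum_mem_singleton]
  intro γ hγ
  constructor
  · exact fun hmem => huniq γ hmem.1 ((weight_ne_zero_iff D Q γ).1 hγ)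
  · rintro rfl
    exact ⟨hcanon, hhd⟩

theorem comp_vecCons_eq_iff {α β : Type*} (γ : α → β) (x y : α) (a b : β) :
    γ ∘ ![x, y] = ![a, b] ↔ γ x = a ∧ γ y = b := by
  simp [funext_iff, Fin.forall_fin_two]

theorem mem_D15_iff {rel : Srp.Rel} {t : Fin (Srp.ar rel) → ℕ} : t ∈ D15 rel ↔ t = ![0, 1] := by
  cases rel
  · exact Multiset.mem_singleton
  · exact Multiset.mem_cons.trans ((or_congr_right Multiset.mem_singleton).trans or_self_iff)

theorem D15_sat_Sigma15 : DBSat D15 Sigma15 := by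
  intro d hd
  simp only [Sigma15, List.mem_cons, List.not_mem_nil, or_false] at hd
  rcases hd with rfl | rfl
  · intro γ hγ
    have h1 := (comp_vecCons_eq_iff γ 0 1 0 1).1 (mem_D15_iff.1 (hγ ⟨.p, ![0, 1]⟩ (by simp [egd1])))
    have h2 := (comp_vecCons_eq_iff γ 0 2 0 1).1 (mem_D15_iff.1 (hγ ⟨.p, ![0, 2]⟩ (by simp [egd1])))
    exact h1.2.trans h2.2.symm
  · intro γ hγ
    refine ⟨γ, fun _ _ => rfl, ?_⟩
    simp only [tgd2', List.mem_cons, List.not_mem_nil, or_false, forall_eq]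
    have hr := mem_D15_iff.1 (hγ ⟨.r, ![0, 1]⟩ (by simp [tgd2']))
    exact mem_D15_iff.2 hr

/-- `A ↦ a`, `B ↦ b` in the encoding `a = 0`, `b = 1`; `0` is also the default value. -/
def abAssign : ℕ → ℕ := fun x => if x = 1 then 1 else 0

theorem abAssign_comp : abAssign ∘ ![0, 1] = ![0, 1] :=
  (comp_vecCons_eq_iff _ _ _ _ _).2 ⟨rfl, rfl⟩

theorem canon_abAssign {Q : CQ Srp} (hQ : Q.vars = {0, 1}) : Canon Q abAssign := by
  intro x hx
  rw [hQ] at hx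
  simp only [Set.mem_insert_iff, Set.mem_singleton_iff, not_or] at hx
  simp [abAssign, hx.2]

theorem bagMult_D15_eq_weight {Q : CQ Srp} (hvars : Q.vars = {0, 1}) (hhd : Q.hd = [0])
    (hr : ⟨.r, ![0, 1]⟩ ∈ Q.body) : bagMult D15 Q [0] = weight D15 Q abAssign := by
  refine bagMult_eq_weight_of_unique (canon_abAssign hvars) (by simp [hhd, abAssign]) ?_
  intro γ hγ hsat
  obtain ⟨h0, h1⟩ := (comp_vecCons_eq_iff γ 0 1 0 1).1 (mem_D15_iff.1 (hsat _ hr))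
  refine hγ.eq_of_eqOn (canon_abAssign hvars) ?_
  rw [hvars]
  rintro x (rfl | rfl)
  exacts [h0, h1]

theorem Q15_vars : Q15.vars = {0, 1} := by
  ext x
  simp only [CQ.vars, Q15, List.mem_cons, List.not_mem_nil, or_false, exists_eq_left,
    Set.mem_ofPred_eq, Set.mem_insert_iff, Set.mem_singleton_iff]
  simp [Srp, Fin.exists_fin_two, eq_comm]

theorem Q15'_vars : Q15'.vars = {0, 1} := by
  ext x
  simp only [CQ.vars, Q15', List.mem_cons, List.not_mem_nil, or_false, exists_eq_or_imp,
    exists_eq_left, Set.mem_ofPred_eq, Set.mem_insert_iff, Set.mem_singleton_iff]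
  simp [Srp, Fin.exists_fin_two, eq_comm]

theorem weight_Q15 : weight D15 Q15 abAssign = 1 := by
  rw [weight_eq_prod_count]
  show ({![0, 1]} : Multiset (Fin 2 → ℕ)).count (abAssign ∘ ![0, 1]) * 1 = 1
  simp [abAssign_comp]

theorem weight_Q15' : weight D15 Q15' abAssign = 2 := by
  rw [weight_eq_prod_count]
  show ({![0, 1]} : Multiset (Fin 2 → ℕ)).count (abAssign ∘ ![0, 1]) *
    (({![0, 1], ![0, 1]} : Multiset (Fin 2 → ℕ)).count (abAssign ∘ ![0, 1]) * 1) = 2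
  simp [abAssign_comp]

theorem chase_step_on_bag_relation_unsound_bag :
    DBSat D15 Sigma15 ∧
    bagMult D15 Q15 [0] = 1 ∧
    bagMult D15 Q15' [0] = 2 ∧
    ¬ (∀ D : DB Srp ℕ, DBSat D Sigma15 →
        ∀ t : List ℕ, bagMult D Q15 t = bagMult D Q15' t) := by
  have hQ : bagMult D15 Q15 [0] = 1 := by
    rw [bagMult_D15_eq_weight Q15_vars rfl (by simp [Q15]), weight_Q15]
  have hQ' : bagMult D15 Q15' [0] = 2 := by
    rw [bagMult_D15_eq_weight Q15'_vars rfl (by simp [Q15']), weight_Q15']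
  refine ⟨D15_sat_Sigma15, hQ, hQ', fun hequiv => ?_⟩
  have := hequiv D15 D15_sat_Sigma15 [0]
  omega
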